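/- (Main Theorem, case i = 2.) Let x, x' be distinct nonsingular vectors of V(2n,2), and let (P, H) = f(x), (P', H') = f(x'). Then the following are equivalent: (a) Q(x + x') = 0, x + x' ∉ Π, x + x' ∉ Σ, and every 2-dimensional subspace L containing x + x' with L ⊓ Π ≠ 0 and L ⊓ Σ ≠ 0 satisfies ¬(L ≤ span{x, x'}^⊥) (relation C₂); (b) P ≤ H' and P' ≤ H (relation A₂). -/
import Mathlib


/-- The hyperbolic quadratic form on `V(2n,2)`:
`Q x = ∑_{i=0}^{n-1} x (2i) * x (2i+1)`. -/
def Q (n : ℕ) (x : Fin (2*n) → ZMod 2) : ZMod 2 :=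
  ∑ i : Fin n, x ⟨2*i.1, by have := i.2; omega⟩ * x ⟨2*i.1+1, by have := i.2; omega⟩

/-- The bilinear form associated with `Q`: `B u v = Q (u+v) + Q u + Q v`. -/
def B (n : ℕ) (u v : Fin (2*n) → ZMod 2) : ZMod 2 :=
  Q n (u + v) + Q n u + Q n v

lemma B_eq (n : ℕ) (u v : Fin (2*n) → ZMod 2) :
    B n u v = ∑ i : Fin n,
      (u ⟨2*i.1, by have := i.2; omega⟩ * v ⟨2*i.1+1, by have := i.2; omega⟩
        + u ⟨2*i.1+1, by have := i.2; omega⟩ * v ⟨2*i.1, by have := i.2; omega⟩) := by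
  have key : ∀ a b c d : ZMod 2, (a+c)*(b+d) + a*b + c*d = a*d + c*b := by decide
  simp only [B, Q, Pi.add_apply, ← Finset.sum_add_distrib]
  exact Finset.sum_congr rfl fun i _ => by rw [key]; ring

lemma B_add_left (n : ℕ) (u v w : Fin (2*n) → ZMod 2) :
    B n (u + v) w = B n u w + B n v w := by
  simp only [B_eq, Pi.add_apply, ← Finset.sum_add_distrib]
  exact Finset.sum_congr rfl fun i _ => by ring

lemma B_smul_left (n : ℕ) (c : ZMod 2) (v w : Fin (2*n) → ZMod 2) :
    B n (c • v) w = c * B n v w := by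
  simp only [B_eq, Pi.smul_apply, smul_eq_mul, Finset.mul_sum]
  exact Finset.sum_congr rfl fun i _ => by ring

/-- The perp `S^⊥ = {v : B v s = 0 for all s ∈ S}` of a subspace `S`
with respect to the bilinear form `B`. -/
def perp (n : ℕ) (S : Submodule (ZMod 2) (Fin (2*n) → ZMod 2)) :
    Submodule (ZMod 2) (Fin (2*n) → ZMod 2) where
  carrier := {v | ∀ s ∈ S, B n v s = 0}
  zero_mem' := by intro s _; simp [B_eq]
  add_mem' := by
    intro a b ha hb s hs
    rw [B_add_left, ha s hs, hb s hs, add_zero]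
  smul_mem' := by
    intro c v hv s hs
    rw [B_smul_left, hv s hs, mul_zero]

/-- `Π`, the span of the even-indexed standard basis vectors `e_{2i}`,
a maximal totally singular subspace. -/
def PiSub (n : ℕ) : Submodule (ZMod 2) (Fin (2*n) → ZMod 2) :=
  Submodule.span (ZMod 2) {v | ∃ j : Fin (2*n), j.1 % 2 = 0 ∧ v = Pi.single j 1}

/-- `Σ`, the span of the odd-indexed standard basis vectors `e_{2i+1}`,
a maximal totally singular subspace disjoint from `Π`. -/
def SigmaSub (n : ℕ) : Submodule (ZMod 2) (Fin (2*n) → ZMod 2) :=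
  Submodule.span (ZMod 2) {v | ∃ j : Fin (2*n), j.1 % 2 = 1 ∧ v = Pi.single j 1}

/-- The map `f` sending a nonsingular vector `x` to the antiflag
`(P, H) = ((span{x}^⊥ ⊓ Π)^⊥ ⊓ Σ, span{x}^⊥ ⊓ Σ)` of `Σ`. -/
def antiflagMap (n : ℕ) (x : Fin (2*n) → ZMod 2) :
    Submodule (ZMod 2) (Fin (2*n) → ZMod 2) × Submodule (ZMod 2) (Fin (2*n) → ZMod 2) :=
  (perp n (perp n (Submodule.span (ZMod 2) {x}) ⊓ PiSub n) ⊓ SigmaSub n,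
   perp n (Submodule.span (ZMod 2) {x}) ⊓ SigmaSub n)

section Aux

open Submodule

variable {n : ℕ}

lemma B_comm (n : ℕ) (u v : Fin (2*n) → ZMod 2) : B n u v = B n v u := by
  simp only [B_eq]
  exact Finset.sum_congr rfl fun i _ => by ring

lemma B_add_right (n : ℕ) (u v w : Fin (2*n) → ZMod 2) :
    B n u (v + w) = B n u v + B n u w := by
  rw [B_comm, B_add_left, B_comm n v, B_comm n w]

lemma B_smul_right (n : ℕ) (c : ZMod 2) (u v : Fin (2*n) → ZMod 2) :
    B n u (c • v) = c * B n u v := by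
  rw [B_comm, B_smul_left, B_comm]

lemma mem_perp_span_singleton {x v : Fin (2*n) → ZMod 2} :
    v ∈ perp n (span (ZMod 2) {x}) ↔ B n v x = 0 := by
  constructor
  · intro h; exact h x (subset_span (Set.mem_singleton x))
  · intro h s hs
    obtain ⟨c, rfl⟩ := mem_span_singleton.mp hs
    rw [B_smul_right, h, mul_zero]

lemma mem_perp_span_pair {x y v : Fin (2*n) → ZMod 2} :
    v ∈ perp n (span (ZMod 2) {x, y}) ↔ B n v x = 0 ∧ B n v y = 0 := by
  constructor
  · intro h
    exact ⟨h x (subset_span (by simp)), h y (subset_span (by simp))⟩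
  · rintro ⟨h1, h2⟩ s hs
    obtain ⟨a, b, rfl⟩ := mem_span_pair.mp hs
    rw [B_add_right, B_smul_right, B_smul_right, h1, h2, mul_zero, mul_zero, add_zero]

/-- Submodule of vectors vanishing on coordinates of parity `r`. -/
def coordZero (n : ℕ) (r : ℕ) : Submodule (ZMod 2) (Fin (2*n) → ZMod 2) where
  carrier := {v | ∀ j : Fin (2*n), j.1 % 2 = r → v j = 0}
  zero_mem' := fun _ _ => rfl
  add_mem' := by intro a b ha hb j hj; simp [Pi.add_apply, ha j hj, hb j hj]
  smul_mem' := by intro c v hv j hj; simp [Pi.smul_apply, hv j hj]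

lemma single_mem_span_singles {v : Fin (2*n) → ZMod 2} (r : ℕ)
    (h : ∀ j : Fin (2*n), j.1 % 2 = r → v j = 0) (hr : r < 2) :
    v ∈ span (ZMod 2) {v : Fin (2*n) → ZMod 2 | ∃ j : Fin (2*n), j.1 % 2 = 1 - r ∧ v = Pi.single j 1} := by
  have hv : v = ∑ j, Pi.single j (v j) := (Finset.univ_sum_single v).symm
  rw [hv]
  apply Submodule.sum_mem
  intro j _
  by_cases hj : j.1 % 2 = r
  · rw [h j hj]; simp
  · have hj' : j.1 % 2 = 1 - r := by omega
    have : Pi.single j (v j) = (v j) • (Pi.single j 1 : Fin (2*n) → ZMod 2) := by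
      funext k
      by_cases hk : k = j
      · subst hk; simp
      · simp [Pi.single_eq_of_ne hk]
    rw [this]
    exact Submodule.smul_mem _ _ (subset_span ⟨j, hj', rfl⟩)

lemma mem_PiSub_iff {v : Fin (2*n) → ZMod 2} :
    v ∈ PiSub n ↔ ∀ j : Fin (2*n), j.1 % 2 = 1 → v j = 0 := by
  constructor
  · intro h
    have hle : PiSub n ≤ coordZero n 1 := by
      apply span_le.mpr
      rintro _ ⟨j, hj, rfl⟩ j' hj'
      apply Pi.single_eq_of_ne
      intro hjj
      rw [hjj] at hj'; omega
    exact hle h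
  · intro h
    exact single_mem_span_singles 1 h (by omega)

lemma mem_SigmaSub_iff {v : Fin (2*n) → ZMod 2} :
    v ∈ SigmaSub n ↔ ∀ j : Fin (2*n), j.1 % 2 = 0 → v j = 0 := by
  constructor
  · intro h
    have hle : SigmaSub n ≤ coordZero n 0 := by
      apply span_le.mpr
      rintro _ ⟨j, hj, rfl⟩ j' hj'
      apply Pi.single_eq_of_ne
      intro hjj
      rw [hjj] at hj'; omega
    exact hle h
  · intro h
    exact single_mem_span_singles 0 h (by omega)

/-- The even-coordinate part of a vector. -/
def evenPart (n : ℕ) (x : Fin (2*n) → ZMod 2) : Fin (2*n) → ZMod 2 :=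
  fun j => if j.1 % 2 = 0 then x j else 0

/-- The odd-coordinate part of a vector. -/
def oddPart (n : ℕ) (x : Fin (2*n) → ZMod 2) : Fin (2*n) → ZMod 2 :=
  fun j => if j.1 % 2 = 1 then x j else 0

lemma evenPart_add_oddPart (x : Fin (2*n) → ZMod 2) :
    evenPart n x + oddPart n x = x := by
  funext j
  simp only [Pi.add_apply, evenPart, oddPart]
  rcases Nat.mod_two_eq_zero_or_one j.1 with h | h <;> simp [h]

lemma evenPart_mem_Pi (x : Fin (2*n) → ZMod 2) : evenPart n x ∈ PiSub n :=
  mem_PiSub_iff.mpr fun j hj => by simp [evenPart, hj]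

lemma oddPart_mem_Sigma (x : Fin (2*n) → ZMod 2) : oddPart n x ∈ SigmaSub n :=
  mem_SigmaSub_iff.mpr fun j hj => by simp [oddPart, hj]

lemma oddPart_eq_of_mem_Sigma {v : Fin (2*n) → ZMod 2} (h : v ∈ SigmaSub n) :
    oddPart n v = v := by
  funext j
  rcases Nat.mod_two_eq_zero_or_one j.1 with hj | hj
  · simp [oddPart, hj, (mem_SigmaSub_iff.mp h) j hj]
  · simp [oddPart, hj]

lemma evenPart_add (u v : Fin (2*n) → ZMod 2) :
    evenPart n (u + v) = evenPart n u + evenPart n v := by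
  funext j
  simp only [Pi.add_apply, evenPart]
  split <;> simp

lemma oddPart_add (u v : Fin (2*n) → ZMod 2) :
    oddPart n (u + v) = oddPart n u + oddPart n v := by
  funext j
  simp only [Pi.add_apply, oddPart]
  split <;> simp

lemma B_oddPart_left (n : ℕ) (u v : Fin (2*n) → ZMod 2) :
    B n (oddPart n u) v = B n (evenPart n v) u := by
  simp only [B_eq]
  refine Finset.sum_congr rfl fun i _ => ?_
  have h0 : 2 * i.1 % 2 = 0 := by omega
  have h1 : (2 * i.1 + 1) % 2 = 1 := by omega
  simp only [oddPart, evenPart, h0, h1]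
  norm_num
  ring

lemma B_evenPart_self (n : ℕ) (v : Fin (2*n) → ZMod 2) :
    B n (evenPart n v) v = Q n v := by
  simp only [B_eq, Q]
  refine Finset.sum_congr rfl fun i _ => ?_
  have h0 : 2 * i.1 % 2 = 0 := by omega
  have h1 : (2 * i.1 + 1) % 2 = 1 := by omega
  simp only [evenPart, h0, h1]
  norm_num

lemma B_oddPart_self (n : ℕ) (v : Fin (2*n) → ZMod 2) :
    B n (oddPart n v) v = Q n v := by
  rw [B_oddPart_left, B_evenPart_self]

lemma B_odd_odd (n : ℕ) (u v : Fin (2*n) → ZMod 2) :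
    B n (oddPart n u) (oddPart n v) = 0 := by
  simp only [B_eq]
  rw [Finset.sum_eq_zero]
  intro i _
  have h0 : 2 * i.1 % 2 = 0 := by omega
  have h1 : (2 * i.1 + 1) % 2 = 1 := by omega
  simp only [oddPart, h0, h1]
  norm_num

lemma B_split (n : ℕ) (u v : Fin (2*n) → ZMod 2) :
    B n u v = B n (evenPart n u) v + B n (oddPart n u) v := by
  rw [← B_add_left, evenPart_add_oddPart]

end Aux
section Aux2

open Submodule

variable {n : ℕ}

lemma zmod2_cases : ∀ a : ZMod 2, a = 0 ∨ a = 1 := by decide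

lemma zmod2_add_eq_zero : ∀ a b : ZMod 2, a + b = 0 → a = b := by decide

lemma evenPart_eq_of_mem_Pi {v : Fin (2*n) → ZMod 2} (h : v ∈ PiSub n) :
    evenPart n v = v := by
  funext j
  rcases Nat.mod_two_eq_zero_or_one j.1 with hj | hj
  · simp [evenPart, hj]
  · simp [evenPart, hj, (mem_PiSub_iff.mp h) j hj]

lemma finrank_span_pair {u v : Fin (2*n) → ZMod 2} (hu : u ≠ 0) (hv : v ≠ 0)
    (huv : u ≠ v) :
    Module.finrank (ZMod 2) (span (ZMod 2) ({u, v} : Set (Fin (2*n) → ZMod 2))) = 2 := by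
  have hli : LinearIndependent (ZMod 2) ![u, v] := by
    rw [LinearIndependent.pair_iff]
    intro s t hst
    rcases zmod2_cases s with hs | hs <;> rcases zmod2_cases t with ht | ht <;>
        subst hs <;> subst ht
    · exact ⟨rfl, rfl⟩
    · simp only [zero_smul, one_smul, zero_add] at hst; exact absurd hst hv
    · simp only [zero_smul, one_smul, add_zero] at hst; exact absurd hst hu
    · exfalso
      apply huv
      simp only [one_smul] at hst
      funext j
      have := congrFun hst j
      exact zmod2_add_eq_zero _ _ this
  have hr := finrank_span_eq_card (R := ZMod 2) hli
  have hrange : Set.range ![u, v] = {u, v} := by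
    simp [Matrix.range_cons, Matrix.range_empty, Set.pair_comm]
  rw [hrange] at hr
  simpa using hr

lemma oddPart_mem_P (x : Fin (2*n) → ZMod 2) : oddPart n x ∈ (antiflagMap n x).1 := by
  simp only [antiflagMap]
  refine Submodule.mem_inf.mpr ⟨?_, oddPart_mem_Sigma x⟩
  intro s hs
  rw [Submodule.mem_inf] at hs
  obtain ⟨hs1, hs2⟩ := hs
  rw [B_oddPart_left, evenPart_eq_of_mem_Pi hs2]
  exact mem_perp_span_singleton.mp hs1

lemma P_le_H {x y : Fin (2*n) → ZMod 2} (h : B n (evenPart n y) x = 0) :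
    (antiflagMap n x).1 ≤ (antiflagMap n y).2 := by
  intro w hw
  simp only [antiflagMap] at hw ⊢
  rw [Submodule.mem_inf] at hw
  obtain ⟨hw1, hw2⟩ := hw
  refine Submodule.mem_inf.mpr ⟨mem_perp_span_singleton.mpr ?_, hw2⟩
  have hwo : oddPart n w = w := oddPart_eq_of_mem_Sigma hw2
  have hsplit : B n w y = B n w (evenPart n y) + B n w (oddPart n y) := by
    rw [← B_add_right, evenPart_add_oddPart]
  have hzero : B n w (oddPart n y) = 0 := by
    calc B n w (oddPart n y) = B n (oddPart n w) (oddPart n y) := by rw [hwo]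
    _ = 0 := B_odd_odd n w y
  have h1 : B n w (evenPart n y) = 0 :=
    hw1 _ (Submodule.mem_inf.mpr ⟨mem_perp_span_singleton.mpr h, evenPart_mem_Pi y⟩)
  rw [hsplit, h1, hzero, add_zero]

end Aux2
/-- Main Theorem, case `i = 2`: for distinct nonsingular vectors `x, x'` with
`f x = (P, H)` and `f x' = (P', H')`, relation `C₂` — `x + x'` is singular, lies
outside `Π` and `Σ`, and every line through `x + x'` crossing both `Π` and `Σ`
is not contained in `span{x, x'}^⊥` — holds if and only if `P ≤ H'` and `P' ≤ H`
(relation `A₂`). -/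
theorem main_case_two (n : ℕ) (hn : 2 ≤ n) (x x' : Fin (2*n) → ZMod 2)
    (hxx' : x ≠ x') (hx : Q n x = 1) (hx' : Q n x' = 1) :
    (Q n (x + x') = 0 ∧ x + x' ∉ PiSub n ∧ x + x' ∉ SigmaSub n ∧
      ∀ L : Submodule (ZMod 2) (Fin (2*n) → ZMod 2),
        Module.finrank (ZMod 2) L = 2 → x + x' ∈ L →
        L ⊓ PiSub n ≠ ⊥ → L ⊓ SigmaSub n ≠ ⊥ →
        ¬ L ≤ perp n (Submodule.span (ZMod 2) {x, x'})) ↔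
    ((antiflagMap n x).1 ≤ (antiflagMap n x').2 ∧
      (antiflagMap n x').1 ≤ (antiflagMap n x).2) := by
  classical
  have hBxx' : B n x x' = B n (evenPart n x) x' + B n (evenPart n x') x := by
    rw [B_split, B_oddPart_left]
  have hBdef : B n x x' = Q n (x + x') + Q n x + Q n x' := rfl
  have hQsum : Q n (x + x') = B n (evenPart n x) x' + B n (evenPart n x') x
      + Q n x + Q n x' := by
    have key : ∀ a b c : ZMod 2, a + b + c + b + c = a := by decide
    calc Q n (x + x')
        = Q n (x + x') + Q n x + Q n x' + Q n x + Q n x' := (key _ _ _).symm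
      _ = B n x x' + Q n x + Q n x' := by rw [← hBdef]
      _ = B n (evenPart n x) x' + B n (evenPart n x') x + Q n x + Q n x' := by
          rw [hBxx']
  -- the right-hand side is equivalent to α = 0 ∧ β = 0
  have hRHS : ((antiflagMap n x).1 ≤ (antiflagMap n x').2 ∧
      (antiflagMap n x').1 ≤ (antiflagMap n x).2) ↔
      (B n (evenPart n x) x' = 0 ∧ B n (evenPart n x') x = 0) := by
    constructor
    · rintro ⟨h1, h2⟩
      have hb := h1 (oddPart_mem_P x)
      have ha := h2 (oddPart_mem_P x')
      simp only [antiflagMap] at ha hb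
      rw [Submodule.mem_inf] at ha hb
      constructor
      · have := mem_perp_span_singleton.mp ha.1
        rwa [B_oddPart_left] at this
      · have := mem_perp_span_singleton.mp hb.1
        rwa [B_oddPart_left] at this
    · rintro ⟨ha, hb⟩
      exact ⟨P_le_H hb, P_le_H ha⟩
  rw [hRHS]
  constructor
  · -- C₂ → α = 0 ∧ β = 0
    rintro ⟨hQ0, hPi, hSig, hL⟩
    have hαβ : B n (evenPart n x) x' = B n (evenPart n x') x := by
      apply zmod2_add_eq_zero
      have := hQsum
      rw [hQ0, hx, hx'] at this
      have key : ∀ a : ZMod 2, (0 : ZMod 2) = a + 1 + 1 → a = 0 := by decide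
      exact key _ this
    rcases zmod2_cases (B n (evenPart n x) x') with hα | hα
    · exact ⟨hα, hαβ ▸ hα⟩
    · exfalso
      have hβ : B n (evenPart n x') x = 1 := hαβ ▸ hα
      set u := evenPart n (x + x') with hu
      set v := oddPart n (x + x') with hv
      have hune : u ≠ 0 := by
        intro h0
        apply hSig
        apply mem_SigmaSub_iff.mpr
        intro j hj
        have := congrFun h0 j
        simpa [hu, evenPart, hj] using this
      have hvne : v ≠ 0 := by
        intro h0
        apply hPi
        apply mem_PiSub_iff.mpr
        intro j hj
        have := congrFun h0 j
        simpa [hv, oddPart, hj] using this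
      have huv : u ≠ v := by
        intro h
        apply hune
        funext j
        rcases Nat.mod_two_eq_zero_or_one j.1 with hj | hj
        · have := congrFun h j
          simp only [hu, hv, evenPart, oddPart, hj] at this
          simpa [hu, evenPart, hj] using this
        · simp [hu, evenPart, hj]
      refine hL (Submodule.span (ZMod 2) {u, v}) (finrank_span_pair hune hvne huv)
        ?_ ?_ ?_ ?_
      · have hzuv : x + x' = u + v := (evenPart_add_oddPart (x + x')).symm
        rw [hzuv]
        exact Submodule.add_mem _ (Submodule.subset_span (by simp))
          (Submodule.subset_span (by simp))
      · rw [Submodule.ne_bot_iff]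
        exact ⟨u, Submodule.mem_inf.mpr
          ⟨Submodule.subset_span (by simp), evenPart_mem_Pi _⟩, hune⟩
      · rw [Submodule.ne_bot_iff]
        exact ⟨v, Submodule.mem_inf.mpr
          ⟨Submodule.subset_span (by simp), oddPart_mem_Sigma _⟩, hvne⟩
      · have hBux : B n u x = 0 := by
          rw [hu, evenPart_add, B_add_left, B_evenPart_self, hx, hβ]
          decide
        have hBux' : B n u x' = 0 := by
          rw [hu, evenPart_add, B_add_left, B_evenPart_self, hx', hα]
          decide
        have hBvx : B n v x = 0 := by
          rw [hv, oddPart_add, B_add_left, B_oddPart_self, hx, B_oddPart_left, hα]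
          decide
        have hBvx' : B n v x' = 0 := by
          rw [hv, oddPart_add, B_add_left, B_oddPart_left, hβ, B_oddPart_self, hx']
          decide
        intro w hw
        obtain ⟨s, t, rfl⟩ := Submodule.mem_span_pair.mp hw
        apply mem_perp_span_pair.mpr
        constructor <;> rw [B_add_left, B_smul_left, B_smul_left]
        · rw [hBux, hBvx]; ring
        · rw [hBux', hBvx']; ring
  · -- α = 0 ∧ β = 0 → C₂
    rintro ⟨hα, hβ⟩
    have hQ0 : Q n (x + x') = 0 := by
      rw [hQsum, hα, hβ, hx, hx']; decide
    have hPi : x + x' ∉ PiSub n := by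
      intro hmem
      have hOeq : oddPart n x = oddPart n x' := by
        funext j
        rcases Nat.mod_two_eq_zero_or_one j.1 with hj | hj
        · simp [oddPart, hj]
        · have h0 := mem_PiSub_iff.mp hmem j hj
          simp only [Pi.add_apply] at h0
          simpa [oddPart, hj] using zmod2_add_eq_zero _ _ h0
      have h1 : B n (evenPart n x') x = 1 := by
        rw [← B_oddPart_left, hOeq, B_oddPart_self, hx']
      rw [hβ] at h1
      exact absurd h1 (by decide)
    have hSig : x + x' ∉ SigmaSub n := by
      intro hmem
      have hEeq : evenPart n x = evenPart n x' := by
        funext j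
        rcases Nat.mod_two_eq_zero_or_one j.1 with hj | hj
        · have h0 := mem_SigmaSub_iff.mp hmem j hj
          simp only [Pi.add_apply] at h0
          simpa [evenPart, hj] using zmod2_add_eq_zero _ _ h0
        · simp [evenPart, hj]
      have h1 : B n (evenPart n x) x' = 1 := by
        rw [hEeq, B_evenPart_self, hx']
      rw [hα] at h1
      exact absurd h1 (by decide)
    refine ⟨hQ0, hPi, hSig, ?_⟩
    intro L hrank hzL hPiL hSigL hle
    obtain ⟨p, hpL, hpne⟩ := (Submodule.ne_bot_iff _).mp hPiL
    obtain ⟨q, hqL, hqne⟩ := (Submodule.ne_bot_iff _).mp hSigL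
    rw [Submodule.mem_inf] at hpL hqL
    obtain ⟨hpL, hpPi⟩ := hpL
    obtain ⟨hqL, hqSig⟩ := hqL
    have hzne : x + x' ≠ 0 := by
      intro h0
      apply hxx'
      funext j
      have := congrFun h0 j
      exact zmod2_add_eq_zero _ _ this
    have hzp : x + x' ≠ p := fun h => hPi (h ▸ hpPi)
    have hspan : Submodule.span (ZMod 2) {x + x', p} = L := by
      apply Submodule.eq_of_le_of_finrank_eq
      · rw [Submodule.span_le, Set.insert_subset_iff, Set.singleton_subset_iff]
        exact ⟨hzL, hpL⟩
      · rw [finrank_span_pair hzne hpne hzp, hrank]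
    rw [← hspan] at hqL
    obtain ⟨s, t, hst⟩ := Submodule.mem_span_pair.mp hqL
    rcases zmod2_cases s with hs | hs <;> rcases zmod2_cases t with ht | ht <;>
        subst hs <;> subst ht
    · simp only [zero_smul, add_zero] at hst
      exact hqne hst.symm
    · -- q = p : then p ∈ Π ⊓ Σ nonzero, impossible
      simp only [zero_smul, one_smul, zero_add] at hst
      apply hpne
      funext j
      rcases Nat.mod_two_eq_zero_or_one j.1 with hj | hj
      · rw [hst] at hpL ⊢
        exact mem_SigmaSub_iff.mp hqSig j hj
      · exact mem_PiSub_iff.mp hpPi j hj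
    · -- q = x + x' : contradicts x + x' ∉ Σ
      simp only [one_smul, zero_smul, add_zero] at hst
      exact hSig (hst ▸ hqSig)
    · -- q = (x + x') + p
      simp only [one_smul] at hst
      have hpeq : p = evenPart n (x + x') := by
        funext j
        rcases Nat.mod_two_eq_zero_or_one j.1 with hj | hj
        · have hq0 : q j = 0 := mem_SigmaSub_iff.mp hqSig j hj
          have h0 := congrFun hst j
          simp only [Pi.add_apply] at h0
          rw [hq0] at h0
          have := zmod2_add_eq_zero _ _ h0
          simpa [evenPart, hj, Pi.add_apply] using this.symm
        · simp [evenPart, hj, mem_PiSub_iff.mp hpPi j hj]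
      have hBpx : B n p x = 1 := by
        rw [hpeq, evenPart_add, B_add_left, B_evenPart_self, hx, hβ]
        decide
      have h0 := (mem_perp_span_pair.mp (hle hpL)).1
      rw [hBpx] at h0
      exact one_ne_zero h0
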